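/- arXiv:math/0610269 — 5 statements merged into one kernel-verified Lean document; each statement's English description precedes it below -/
import Mathlib

section
/- Let K and L be finite groups with L acting on K, forming the semidirect product K ⋊ L. If H is a (K ⋊ L)-graded (K ⋊ L)-module satisfying the self-invariance axiom (for every element γ of K ⋊ L, the action of γ on the γ-graded component is the identity), then for every l ∈ L, the action of l on the K-coinvariants of the component ⊕_{k∈K} H_{kl} is the identity map. -/
/-!
STATEMENT 0: Let `K` and `L` be finite groups with `L` acting on `K`, forming `K ⋊ L`.
If `H` is a `(K ⋊ L)`-graded `(K ⋊ L)`-module satisfying the self-invariance axiom,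
then for every `l ∈ L`, the action of `l` on the `K`-coinvariants of the component
`⊕_{k ∈ K} H_{kl}` is the identity map.  The `K`-coinvariants of a vector `w` are
realized by the averaging map `π_K (w) = (1/|K|) ∑_{k ∈ K} ρ(k) w`.
-/

open SemidirectProduct

theorem stmt0 {K L V : Type*} [Group K] [Group L] [Fintype K]
    [AddCommGroup V] [Module ℚ V]
    (φ : L →* MulAut K)
    (H : K ⋊[φ] L → Submodule ℚ V)
    (ρ : (K ⋊[φ] L) →* (V →ₗ[ℚ] V))
    (hgrad : ∀ (γ m : K ⋊[φ] L), ∀ v ∈ H m, ρ γ v ∈ H (γ⁻¹ * m * γ))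
    (hself : ∀ γ : K ⋊[φ] L, ∀ v ∈ H γ, ρ γ v = v)
    (l : L) (w : V)
    (hw : w ∈ ⨆ k : K, H (inl k * inr l)) :
    ρ (inr l) ((Fintype.card K : ℚ)⁻¹ • ∑ k : K, ρ (inl k) w)
      = (Fintype.card K : ℚ)⁻¹ • ∑ k : K, ρ (inl k) w := by
  -- It suffices to show ρ(inr l) (∑ k, ρ(inl k) w) = ∑ k, ρ(inl k) w.
  suffices h : ρ (inr l) (∑ k : K, ρ (inl k) w) = ∑ k : K, ρ (inl k) w by
    rw [map_smul, h]
  -- Prove it by induction on the supremum.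
  refine Submodule.iSup_induction _
    (motive := fun v => ρ (inr l) (∑ k : K, ρ (inl k) v) = ∑ k : K, ρ (inl k) v)
    hw ?_ ?_ ?_
  · intro k₀ v hv
    -- self-invariance: ρ(inr l) v = ρ(inl k₀⁻¹) v
    have hsv : ρ (inl k₀ * inr l) v = v := hself _ v hv
    have key : ρ (inr l) v = ρ (inl k₀⁻¹) v := by
      have : ρ (inl k₀⁻¹ * (inl k₀ * inr l)) v = ρ (inl k₀⁻¹) v := by
        rw [map_mul]
        simp only [Module.End.mul_apply, hsv]
      simpa [mul_assoc] using this
    rw [map_sum]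
    have step : ∀ k : K, ρ (inr l) (ρ (inl k) v) = ρ (inl (φ l k * k₀⁻¹)) v := by
      intro k
      have h1 : ρ (inr l) (ρ (inl k) v) = ρ (inr l * inl k) v := by
        rw [map_mul]; rfl
      have h2 : (inr l * inl k : K ⋊[φ] L) = inl (φ l k) * inr l := by
        ext <;> simp
      rw [h1, h2, map_mul]
      simp only [Module.End.mul_apply, key]
      rw [map_mul inl, map_mul ρ]
      rfl
    calc ∑ k : K, ρ (inr l) (ρ (inl k) v)
        = ∑ k : K, ρ (inl (φ l k * k₀⁻¹)) v := by
          exact Finset.sum_congr rfl fun k _ => step k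
      _ = ∑ k : K, ρ (inl k) v := by
          apply Fintype.sum_equiv (((φ l).toEquiv).trans (Equiv.mulRight k₀⁻¹))
          intro k; rfl
  · simp
  · intro x y hx hy
    simp only [map_add, Finset.sum_add_distrib, map_add] at *
    rw [hx, hy]
end

section
/- Let K and L be finite groups with a (K ⋊ L)-Frobenius algebra H (over a field of characteristic 0). Then the trace axiom descends to K-coinvariants: for all l₁, l₂ ∈ L and v in the K-coinvariants of the [l₁,l₂]-graded part, Tr on the K-coinvariants of ⊕_k H_{kl₁} of (left multiplication by v composed with ρ(l₂⁻¹)) equals Tr on the K-coinvariants of ⊕_k H_{kl₂} of (ρ(l₁) composed with left multiplication by v). -/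
/-!
Let `P_g` be the projection onto `H_g` along the grading and `π` the `K`-average. On
`S_l = π(⊕_k H_{k l})` the map `π ∘ ∑_k P_{k l}` is a projection onto `S_l`, so the trace of an
operator `f` on `S_l` is `|K|⁻¹ ∑_{k,j} Tr_V (f ρ(k) P_{j l})`. By the trace axiom, and since
off-diagonal blocks have zero trace, `Tr_V (L_u ρ(y⁻¹) P_x) = Tr_V (ρ(x) L_u P_y)` for all
`x, y ∈ G` and homogeneous, hence all, `u`. A `K`-coinvariant `v` is `K`-invariant, so `L_v`
commutes with `ρ(K)`, and both sides of the claim become the same double sum over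
`x ∈ K l₁`, `y ∈ K l₂`.
-/

open SemidirectProduct
open scoped commutatorElement

namespace LinearMap.IsProj

variable {𝕜 M : Type*} [Field 𝕜] [AddCommGroup M] [Module 𝕜 M] [FiniteDimensional 𝕜 M]
  {p : Submodule 𝕜 M} {e : M →ₗ[𝕜] M}

theorem trace_restrict_eq_trace_comp (he : IsProj p e) (f : M →ₗ[𝕜] M)
    (hf : ∀ x ∈ p, f x ∈ p) :
    LinearMap.trace 𝕜 p (f.restrict hf) = LinearMap.trace 𝕜 M (f ∘ₗ e) := by
  rw [← trace_restrict_eq_of_forall_mem p (f ∘ₗ e) fun x ↦ hf _ (he.map_mem x)]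
  congr 1
  ext x
  simp [he.map_id x x.2]

end LinearMap.IsProj

namespace DirectSum.IsInternal

section Semiring

variable {R M ι : Type*} [Semiring R] [AddCommMonoid M] [Module R M] [DecidableEq ι]
  {A : ι → Submodule R M} (h : IsInternal A)

noncomputable def proj (i : ι) : M →ₗ[R] M :=
  (A i).subtype ∘ₗ component R ι (fun i ↦ A i) i ∘ₗ
    (LinearEquiv.ofBijective (coeLinearMap A) h).symm.toLinearMap

theorem proj_mem (i : ι) (x : M) : h.proj i x ∈ A i :=
  Subtype.prop _

theorem proj_apply_of_mem_same {i : ι} {x : M} (hx : x ∈ A i) : h.proj i x = x := by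
  simp [proj, ← apply_eq_component, h.ofBijective_coeLinearMap_of_mem hx]

theorem proj_apply_of_mem_ne {i j : ι} {x : M} (hx : x ∈ A j) (hij : j ≠ i) :
    h.proj i x = 0 := by
  simp [proj, ← apply_eq_component, h.ofBijective_coeLinearMap_of_mem_ne hij hx]

theorem isProj_proj (i : ι) : LinearMap.IsProj (A i) (h.proj i) :=
  ⟨h.proj_mem i, fun _ ↦ h.proj_apply_of_mem_same⟩

theorem isProj_sum_proj {κ : Type*} [Fintype κ] {g : κ → ι} (hg : Function.Injective g) :
    LinearMap.IsProj (⨆ k, A (g k)) (∑ k, h.proj (g k)) := by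
  refine ⟨fun x ↦ ?_, fun x hx ↦ ?_⟩
  · rw [LinearMap.coe_sum, Finset.sum_apply]
    exact Submodule.sum_mem _ fun k _ ↦ Submodule.mem_iSup_of_mem k (h.proj_mem _ x)
  · induction hx using Submodule.iSup_induction' with
    | mem j y hy =>
      rw [LinearMap.coe_sum, Finset.sum_apply, Finset.sum_eq_single j, h.proj_apply_of_mem_same hy]
      · exact fun k _ hkj ↦ h.proj_apply_of_mem_ne hy (hg.ne hkj.symm)
      · simp
    | zero => simp
    | add y z _ _ hy hz => rw [map_add, hy, hz]

end Semiring

variable {𝕜 M ι : Type*} [Field 𝕜] [AddCommGroup M] [Module 𝕜 M] [FiniteDimensional 𝕜 M]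
  [DecidableEq ι] {A : ι → Submodule 𝕜 M} (h : IsInternal A)

theorem trace_comp_proj_eq_zero {i j : ι} (T : M →ₗ[𝕜] M) (hT : ∀ x ∈ A i, T x ∈ A j)
    (hij : j ≠ i) : LinearMap.trace 𝕜 M (T ∘ₗ h.proj i) = 0 := by
  have hP : h.proj i ∘ₗ h.proj i = h.proj i := (h.isProj_proj i).isIdempotentElem.eq
  have hzero : h.proj i ∘ₗ T ∘ₗ h.proj i = 0 := by
    ext x
    exact h.proj_apply_of_mem_ne (hT _ (h.proj_mem i x)) hij
  rw [← hP, ← LinearMap.comp_assoc, LinearMap.trace_comp_comm', hzero,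
    map_zero]

end DirectSum.IsInternal

section GradedTrace

variable {𝕜 V G : Type*} [Field 𝕜] [AddCommGroup V] [Module 𝕜 V] [Group G]

def TraceAxiom (H : G → Submodule 𝕜 V) (ρ : G →* Module.End 𝕜 V)
    (μ : V →ₗ[𝕜] V →ₗ[𝕜] V) : Prop :=
  ∀ a b : G, ∀ v ∈ H ⁅a, b⁆,
    ∀ (h₁ : ∀ x ∈ H a, ((μ v).comp (ρ b⁻¹)) x ∈ H a)
      (h₂ : ∀ x ∈ H b, ((ρ a).comp (μ v)) x ∈ H b),
    LinearMap.trace 𝕜 (H a) (((μ v).comp (ρ b⁻¹)).restrict h₁)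
      = LinearMap.trace 𝕜 (H b) (((ρ a).comp (μ v)).restrict h₂)

variable [FiniteDimensional 𝕜 V] [DecidableEq G] {H : G → Submodule 𝕜 V}
  (hH : DirectSum.IsInternal H) {ρ : G →* Module.End 𝕜 V} {μ : V →ₗ[𝕜] V →ₗ[𝕜] V}

theorem trace_mul_comp_proj_eq_of_mem
    (hgrad : ∀ (γ m : G), ∀ v ∈ H m, ρ γ v ∈ H (γ⁻¹ * m * γ))
    (hmulgrad : ∀ m₁ m₂ : G, ∀ v₁ ∈ H m₁, ∀ v₂ ∈ H m₂, μ v₁ v₂ ∈ H (m₁ * m₂))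
    (htrace : TraceAxiom H ρ μ)
    {d : G} {u : V} (hu : u ∈ H d) (x y : G) :
    LinearMap.trace 𝕜 V (μ u ∘ₗ ρ y⁻¹ ∘ₗ hH.proj x)
      = LinearMap.trace 𝕜 V (ρ x ∘ₗ μ u ∘ₗ hH.proj y) := by
  have h₁ : ∀ w ∈ H x, (μ u ∘ₗ ρ y⁻¹) w ∈ H (d * (y * x * y⁻¹)) := fun w hw ↦
    hmulgrad _ _ u hu _ (by simpa using hgrad y⁻¹ x w hw)
  have h₂ : ∀ w ∈ H y, (ρ x ∘ₗ μ u) w ∈ H (x⁻¹ * (d * y) * x) := fun w hw ↦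
    hgrad x _ _ (hmulgrad d y u hu w hw)
  simp only [← LinearMap.comp_assoc]
  -- both blocks are diagonal exactly when `d = ⁅x, y⁆`
  by_cases hd : d = ⁅x, y⁆
  · subst hd
    rw [show ⁅x, y⁆ * (y * x * y⁻¹) = x by group] at h₁
    rw [show x⁻¹ * (⁅x, y⁆ * y) * x = y by group] at h₂
    rw [← (hH.isProj_proj x).trace_restrict_eq_trace_comp _ h₁,
      ← (hH.isProj_proj y).trace_restrict_eq_trace_comp _ h₂]
    exact htrace x y u hu h₁ h₂
  · rw [hH.trace_comp_proj_eq_zero _ h₁, hH.trace_comp_proj_eq_zero _ h₂]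
    · intro h
      apply hd
      calc d = x * (x⁻¹ * (d * y) * x) * x⁻¹ * y⁻¹ := by group
        _ = ⁅x, y⁆ := by rw [h, commutatorElement_def]
    · intro h
      apply hd
      calc d = d * (y * x * y⁻¹) * y * x⁻¹ * y⁻¹ := by group
        _ = ⁅x, y⁆ := by rw [h, commutatorElement_def]

theorem trace_mul_comp_proj_eq
    (hgrad : ∀ (γ m : G), ∀ v ∈ H m, ρ γ v ∈ H (γ⁻¹ * m * γ))
    (hmulgrad : ∀ m₁ m₂ : G, ∀ v₁ ∈ H m₁, ∀ v₂ ∈ H m₂, μ v₁ v₂ ∈ H (m₁ * m₂))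
    (htrace : TraceAxiom H ρ μ)
    (u : V) (x y : G) :
    LinearMap.trace 𝕜 V (μ u ∘ₗ ρ y⁻¹ ∘ₗ hH.proj x)
      = LinearMap.trace 𝕜 V (ρ x ∘ₗ μ u ∘ₗ hH.proj y) := by
  have hu : u ∈ ⨆ d, H d := hH.submodule_iSup_eq_top ▸ Submodule.mem_top
  induction hu using Submodule.iSup_induction' with
  | mem d u hu => exact trace_mul_comp_proj_eq_of_mem hH hgrad hmulgrad htrace hu x y
  | zero => simp
  | add u u' _ _ h h' =>
    simp only [map_add, LinearMap.add_comp, LinearMap.comp_add, h, h']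

end GradedTrace

section Coinvariants

variable {𝕜 V K : Type*} [Field 𝕜] [AddCommGroup V] [Module 𝕜 V] [Group K] [Fintype K]

theorem apply_average_apply (σ : K →* Module.End 𝕜 V) (k : K) (x : V) :
    σ k (((Fintype.card K : 𝕜)⁻¹ • ∑ j, σ j) x) = ((Fintype.card K : 𝕜)⁻¹ • ∑ j, σ j) x := by
  rw [LinearMap.smul_apply, map_smul, LinearMap.coe_sum, Finset.sum_apply, map_sum]
  congr 1
  exact Fintype.sum_equiv (Equiv.mulLeft k) _ _ fun j ↦ by simp [map_mul]

theorem isProj_map_average_comp (σ : K →* Module.End 𝕜 V) (hK : (Fintype.card K : 𝕜) ≠ 0)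
    {W : Submodule 𝕜 V} (hW : ∀ k, ∀ x ∈ W, σ k x ∈ W) {e : V →ₗ[𝕜] V}
    (he : LinearMap.IsProj W e) :
    LinearMap.IsProj (W.map ((Fintype.card K : 𝕜)⁻¹ • ∑ k, σ k))
      (((Fintype.card K : 𝕜)⁻¹ • ∑ k, σ k) ∘ₗ e) := by
  let := invertibleOfNonzero hK
  have hπ : (Fintype.card K : 𝕜)⁻¹ • ∑ k, σ k = Representation.averageMap σ := by
    ext x
    simp [Representation.averageMap, GroupAlgebra.average, map_sum]
  refine ⟨fun x ↦ Submodule.mem_map_of_mem (he.map_mem x), ?_⟩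
  rintro _ ⟨y, hy, rfl⟩
  have hπy : ((Fintype.card K : 𝕜)⁻¹ • ∑ k, σ k) y ∈ W := by
    rw [LinearMap.smul_apply, LinearMap.coe_sum, Finset.sum_apply]
    exact W.smul_mem _ (W.sum_mem fun k _ ↦ hW k y hy)
  rw [LinearMap.comp_apply, he.map_id _ hπy, hπ]
  exact Representation.averageMap_id σ _ (Representation.averageMap_invariant σ y)

theorem trace_restrict_map_average [FiniteDimensional 𝕜 V] (σ : K →* Module.End 𝕜 V)
    (hK : (Fintype.card K : 𝕜) ≠ 0) {W : Submodule 𝕜 V} (hW : ∀ k, ∀ x ∈ W, σ k x ∈ W)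
    {e : V →ₗ[𝕜] V} (he : LinearMap.IsProj W e) (f : V →ₗ[𝕜] V)
    (hf : ∀ x ∈ W.map ((Fintype.card K : 𝕜)⁻¹ • ∑ k, σ k),
      f x ∈ W.map ((Fintype.card K : 𝕜)⁻¹ • ∑ k, σ k)) :
    LinearMap.trace 𝕜 _ (f.restrict hf)
      = (Fintype.card K : 𝕜)⁻¹ • ∑ k, LinearMap.trace 𝕜 V (f ∘ₗ σ k ∘ₗ e) := by
  rw [(isProj_map_average_comp σ hK hW he).trace_restrict_eq_trace_comp]
  simp only [← Module.End.mul_eq_comp, Finset.mul_sum, Finset.sum_mul, mul_smul_comm,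
    smul_mul_assoc, map_smul, map_sum]

end Coinvariants

namespace SemidirectProduct

variable {K L : Type*} [Group K] [Group L] {φ : L →* MulAut K}

theorem inl_mul_inr_left_injective (l : L) :
    Function.Injective fun k : K ↦ (inl k * inr l : K ⋊[φ] L) :=
  fun a b h ↦ by simpa using congrArg SemidirectProduct.left h

theorem inr_mul_inl (l : L) (k : K) : (inr l * inl k : K ⋊[φ] L) = inl (φ l k) * inr l := by
  rw [inl_aut, map_inv, inv_mul_cancel_right]

theorem inv_inl_mul_inl_mul_inr_mul_inl (k j : K) (l : L) :
    (inl k)⁻¹ * (inl j * inr l) * inl k = (inl (k⁻¹ * j * φ l k) * inr l : K ⋊[φ] L) := by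
  rw [mul_assoc, mul_assoc (inl j), inr_mul_inl, map_mul, map_mul, map_inv]
  group

variable [Fintype K] {M : Type*} [AddCommMonoid M]

theorem sum_inr_mul_inl (f : K ⋊[φ] L → M) (l : L) :
    ∑ k, f (inr l * inl k) = ∑ k, f (inl k * inr l) := by
  simp_rw [inr_mul_inl]
  exact Fintype.sum_equiv (φ l).toEquiv _ _ fun _ ↦ rfl

theorem sum_inv_inr_mul_inl (f : K ⋊[φ] L → M) (l : L) :
    ∑ k, f ((inr l)⁻¹ * inl k) = ∑ k, f (inl k * inr l)⁻¹ := by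
  refine Fintype.sum_equiv (Equiv.inv K) _ _ fun k ↦ ?_
  simp [mul_inv_rev, map_inv]

end SemidirectProduct

theorem trace_restrict_coinvariants {𝕜 V K L : Type*} [Field 𝕜] [CharZero 𝕜] [AddCommGroup V]
    [Module 𝕜 V] [FiniteDimensional 𝕜 V] [Group K] [Group L] [Fintype K]
    {φ : L →* MulAut K} [DecidableEq (K ⋊[φ] L)] {H : K ⋊[φ] L → Submodule 𝕜 V}
    (hH : DirectSum.IsInternal H) {ρ : K ⋊[φ] L →* Module.End 𝕜 V}
    (hgrad : ∀ (γ m : K ⋊[φ] L), ∀ v ∈ H m, ρ γ v ∈ H (γ⁻¹ * m * γ)) (l : L)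
    (f : V →ₗ[𝕜] V)
    (hf : ∀ x ∈ Submodule.map ((Fintype.card K : 𝕜)⁻¹ • ∑ k : K, ρ (inl k))
        (⨆ k : K, H (inl k * inr l)),
      f x ∈ Submodule.map ((Fintype.card K : 𝕜)⁻¹ • ∑ k : K, ρ (inl k))
        (⨆ k : K, H (inl k * inr l))) :
    LinearMap.trace 𝕜 _ (f.restrict hf) = (Fintype.card K : 𝕜)⁻¹ •
      ∑ k, ∑ j, LinearMap.trace 𝕜 V (f ∘ₗ ρ (inl k) ∘ₗ hH.proj (inl j * inr l)) := by
  have hW : ∀ k, ∀ x ∈ ⨆ j : K, H (inl j * inr l), ρ (inl k) x ∈ ⨆ j : K, H (inl j * inr l) := by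
    intro k x hx
    induction hx using Submodule.iSup_induction' with
    | mem j y hy =>
      have := hgrad (inl k) _ y hy
      rw [inv_inl_mul_inl_mul_inr_mul_inl] at this
      exact Submodule.mem_iSup_of_mem _ this
    | zero => simp
    | add y z _ _ hy hz => rw [map_add]; exact Submodule.add_mem _ hy hz
  refine (trace_restrict_map_average (ρ.comp inl) (Nat.cast_ne_zero.mpr Fintype.card_ne_zero) hW
    (hH.isProj_sum_proj (inl_mul_inr_left_injective l)) f hf).trans ?_
  simp only [MonoidHom.comp_apply, ← Module.End.mul_eq_comp, Finset.mul_sum, map_sum]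

theorem sum_sum_trace_mul_comp_proj_eq {𝕜 V K L : Type*} [Field 𝕜] [AddCommGroup V]
    [Module 𝕜 V] [FiniteDimensional 𝕜 V] [Group K] [Group L] [Fintype K]
    {φ : L →* MulAut K} [DecidableEq (K ⋊[φ] L)] {H : K ⋊[φ] L → Submodule 𝕜 V}
    (hH : DirectSum.IsInternal H) {ρ : K ⋊[φ] L →* Module.End 𝕜 V}
    {μ : V →ₗ[𝕜] V →ₗ[𝕜] V}
    (hgrad : ∀ (γ m : K ⋊[φ] L), ∀ v ∈ H m, ρ γ v ∈ H (γ⁻¹ * m * γ))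
    (hmulgrad : ∀ m₁ m₂ : K ⋊[φ] L, ∀ v₁ ∈ H m₁, ∀ v₂ ∈ H m₂, μ v₁ v₂ ∈ H (m₁ * m₂))
    (htrace : TraceAxiom H ρ μ)
    (v : V) (l₁ l₂ : L) :
    ∑ k, ∑ j, LinearMap.trace 𝕜 V (μ v ∘ₗ ρ ((inr l₂)⁻¹ * inl k) ∘ₗ hH.proj (inl j * inr l₁))
      = ∑ k, ∑ j, LinearMap.trace 𝕜 V (ρ (inr l₁ * inl k) ∘ₗ μ v ∘ₗ hH.proj (inl j * inr l₂)) := by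
  calc _ = ∑ k, ∑ j,
          LinearMap.trace 𝕜 V (μ v ∘ₗ ρ (inl k * inr l₂)⁻¹ ∘ₗ hH.proj (inl j * inr l₁)) :=
        sum_inv_inr_mul_inl (fun g ↦
          ∑ j, LinearMap.trace 𝕜 V (μ v ∘ₗ ρ g ∘ₗ hH.proj (inl j * inr l₁))) l₂
    _ = ∑ k, ∑ j, LinearMap.trace 𝕜 V (ρ (inl j * inr l₁) ∘ₗ μ v ∘ₗ hH.proj (inl k * inr l₂)) := by
        simp only [trace_mul_comp_proj_eq hH hgrad hmulgrad htrace]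
    _ = _ := by
        rw [Finset.sum_comm, sum_inr_mul_inl fun g ↦
          ∑ j, LinearMap.trace 𝕜 V (ρ g ∘ₗ μ v ∘ₗ hH.proj (inl j * inr l₂))]

theorem stmt1_general {K L V : Type*} [Group K] [Group L] [Fintype K]
    [AddCommGroup V] [Module ℚ V] [FiniteDimensional ℚ V]
    (φ : L →* MulAut K)
    (H : K ⋊[φ] L → Submodule ℚ V)
    (ρ : (K ⋊[φ] L) →* (V →ₗ[ℚ] V))
    (μ : V →ₗ[ℚ] V →ₗ[ℚ] V)
    -- `H` is a `(K ⋊ L)`-graded `(K ⋊ L)`-module: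
    (hdecomp : ⨆ m, H m = ⊤)
    (hindep : iSupIndep H)
    (hgrad : ∀ (γ m : K ⋊[φ] L), ∀ v ∈ H m, ρ γ v ∈ H (γ⁻¹ * m * γ))
    -- graded multiplication, associativity, braided commutativity, equivariance:
    (hmulgrad : ∀ m₁ m₂ : K ⋊[φ] L, ∀ v₁ ∈ H m₁, ∀ v₂ ∈ H m₂, μ v₁ v₂ ∈ H (m₁ * m₂))
    (hequiv : ∀ (γ : K ⋊[φ] L) (v₁ v₂ : V), μ (ρ γ v₁) (ρ γ v₂) = ρ γ (μ v₁ v₂))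
    -- the trace axiom for `H`:
    (htrace : ∀ a b : K ⋊[φ] L, ∀ v ∈ H ⁅a, b⁆,
      ∀ (h₁ : ∀ x ∈ H a, ((μ v).comp (ρ b⁻¹)) x ∈ H a)
        (h₂ : ∀ x ∈ H b, ((ρ a).comp (μ v)) x ∈ H b),
      LinearMap.trace ℚ (H a) (((μ v).comp (ρ b⁻¹)).restrict h₁)
        = LinearMap.trace ℚ (H b) (((ρ a).comp (μ v)).restrict h₂)) :
    -- Conclusion: the trace axiom for the `K`-coinvariants.
    ∀ l₁ l₂ : L,
      ∀ v ∈ Submodule.map ((Fintype.card K : ℚ)⁻¹ • ∑ k : K, ρ (inl k))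
          (⨆ k : K, H (inl k * inr ⁅l₁, l₂⁆)),
      ∀ (h₁ : ∀ x ∈ Submodule.map ((Fintype.card K : ℚ)⁻¹ • ∑ k : K, ρ (inl k))
            (⨆ k : K, H (inl k * inr l₁)),
          ((μ v).comp (ρ (inr l₂)⁻¹)) x
            ∈ Submodule.map ((Fintype.card K : ℚ)⁻¹ • ∑ k : K, ρ (inl k))
              (⨆ k : K, H (inl k * inr l₁)))
        (h₂ : ∀ x ∈ Submodule.map ((Fintype.card K : ℚ)⁻¹ • ∑ k : K, ρ (inl k))
            (⨆ k : K, H (inl k * inr l₂)),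
          ((ρ (inr l₁)).comp (μ v)) x
            ∈ Submodule.map ((Fintype.card K : ℚ)⁻¹ • ∑ k : K, ρ (inl k))
              (⨆ k : K, H (inl k * inr l₂))),
      LinearMap.trace ℚ
          (Submodule.map ((Fintype.card K : ℚ)⁻¹ • ∑ k : K, ρ (inl k))
            (⨆ k : K, H (inl k * inr l₁)))
          (((μ v).comp (ρ (inr l₂)⁻¹)).restrict h₁)
        = LinearMap.trace ℚ
          (Submodule.map ((Fintype.card K : ℚ)⁻¹ • ∑ k : K, ρ (inl k))
            (⨆ k : K, H (inl k * inr l₂)))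
          (((ρ (inr l₁)).comp (μ v)).restrict h₂) := by
  classical
  intro l₁ l₂ v hv h₁ h₂
  have hH : DirectSum.IsInternal H :=
    DirectSum.isInternal_submodule_of_iSupIndep_of_iSup_eq_top hindep hdecomp
  have hv_fixed : ∀ k : K, ρ (inl k) v = v := by
    obtain ⟨y, -, rfl⟩ := hv
    exact fun k ↦ apply_average_apply (ρ.comp inl) k y
  have hcomm : ∀ (k : K) (T : V →ₗ[ℚ] V), ρ (inl k) ∘ₗ μ v ∘ₗ T = μ v ∘ₗ ρ (inl k) ∘ₗ T := by
    intro k T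
    ext w
    simp only [LinearMap.comp_apply, ← hequiv, hv_fixed]
  rw [trace_restrict_coinvariants hH hgrad, trace_restrict_coinvariants hH hgrad]
  congr 1
  simpa only [map_mul, Module.End.mul_eq_comp, LinearMap.comp_assoc, hcomm] using
    sum_sum_trace_mul_comp_proj_eq hH hgrad hmulgrad htrace v l₁ l₂

theorem stmt1 {K L V : Type*} [Group K] [Group L] [Fintype K] [Fintype L]
    [AddCommGroup V] [Module ℚ V] [FiniteDimensional ℚ V]
    (φ : L →* MulAut K)
    (H : K ⋊[φ] L → Submodule ℚ V)
    (ρ : (K ⋊[φ] L) →* (V →ₗ[ℚ] V))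
    (μ : V →ₗ[ℚ] V →ₗ[ℚ] V)
    (one : V) (η : V →ₗ[ℚ] V →ₗ[ℚ] ℚ)
    -- `H` is a `(K ⋊ L)`-graded `(K ⋊ L)`-module:
    (hdecomp : ⨆ m, H m = ⊤)
    (hindep : iSupIndep H)
    (hgrad : ∀ (γ m : K ⋊[φ] L), ∀ v ∈ H m, ρ γ v ∈ H (γ⁻¹ * m * γ))
    -- self-invariance:
    (hself : ∀ γ : K ⋊[φ] L, ∀ v ∈ H γ, ρ γ v = v)
    -- graded multiplication, associativity, braided commutativity, equivariance:
    (hmulgrad : ∀ m₁ m₂ : K ⋊[φ] L, ∀ v₁ ∈ H m₁, ∀ v₂ ∈ H m₂, μ v₁ v₂ ∈ H (m₁ * m₂))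
    (hassoc : ∀ v₁ v₂ v₃ : V, μ (μ v₁ v₂) v₃ = μ v₁ (μ v₂ v₃))
    (hbraid : ∀ m₁ : K ⋊[φ] L, ∀ v₁ ∈ H m₁, ∀ v₂ : V, μ v₁ v₂ = μ (ρ m₁⁻¹ v₂) v₁)
    (hequiv : ∀ (γ : K ⋊[φ] L) (v₁ v₂ : V), μ (ρ γ v₁) (ρ γ v₂) = ρ γ (μ v₁ v₂))
    -- the metric axioms:
    (hmetsym : ∀ v w : V, η v w = η w v)
    (hmetgrad : ∀ m₁ m₂ : K ⋊[φ] L, m₁ * m₂ ≠ 1 →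
      ∀ v₁ ∈ H m₁, ∀ v₂ ∈ H m₂, η v₁ v₂ = 0)
    (hmetnondeg : ∀ v : V, (∀ w : V, η v w = 0) → v = 0)
    (hmetequiv : ∀ (γ : K ⋊[φ] L) (v w : V), η (ρ γ v) (ρ γ w) = η v w)
    (hmetinv : ∀ v₁ v₂ v₃ : V, η (μ v₁ v₂) v₃ = η v₁ (μ v₂ v₃))
    -- the `G`-invariant identity:
    (honemem : one ∈ H 1)
    (honel : ∀ v : V, μ one v = v) (honer : ∀ v : V, μ v one = v)
    (honeinv : ∀ γ : K ⋊[φ] L, ρ γ one = one)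
    -- the trace axiom for `H`:
    (htrace : ∀ a b : K ⋊[φ] L, ∀ v ∈ H ⁅a, b⁆,
      ∀ (h₁ : ∀ x ∈ H a, ((μ v).comp (ρ b⁻¹)) x ∈ H a)
        (h₂ : ∀ x ∈ H b, ((ρ a).comp (μ v)) x ∈ H b),
      LinearMap.trace ℚ (H a) (((μ v).comp (ρ b⁻¹)).restrict h₁)
        = LinearMap.trace ℚ (H b) (((ρ a).comp (μ v)).restrict h₂)) :
    -- Conclusion: the trace axiom for the `K`-coinvariants.
    ∀ l₁ l₂ : L,
      ∀ v ∈ Submodule.map ((Fintype.card K : ℚ)⁻¹ • ∑ k : K, ρ (inl k))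
          (⨆ k : K, H (inl k * inr ⁅l₁, l₂⁆)),
      ∀ (h₁ : ∀ x ∈ Submodule.map ((Fintype.card K : ℚ)⁻¹ • ∑ k : K, ρ (inl k))
            (⨆ k : K, H (inl k * inr l₁)),
          ((μ v).comp (ρ (inr l₂)⁻¹)) x
            ∈ Submodule.map ((Fintype.card K : ℚ)⁻¹ • ∑ k : K, ρ (inl k))
              (⨆ k : K, H (inl k * inr l₁)))
        (h₂ : ∀ x ∈ Submodule.map ((Fintype.card K : ℚ)⁻¹ • ∑ k : K, ρ (inl k))
            (⨆ k : K, H (inl k * inr l₂)),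
          ((ρ (inr l₁)).comp (μ v)) x
            ∈ Submodule.map ((Fintype.card K : ℚ)⁻¹ • ∑ k : K, ρ (inl k))
              (⨆ k : K, H (inl k * inr l₂))),
      LinearMap.trace ℚ
          (Submodule.map ((Fintype.card K : ℚ)⁻¹ • ∑ k : K, ρ (inl k))
            (⨆ k : K, H (inl k * inr l₁)))
          (((μ v).comp (ρ (inr l₂)⁻¹)).restrict h₁)
        = LinearMap.trace ℚ
          (Submodule.map ((Fintype.card K : ℚ)⁻¹ • ∑ k : K, ρ (inl k))
            (⨆ k : K, H (inl k * inr l₂)))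
          (((ρ (inr l₁)).comp (μ v)).restrict h₂) :=
  stmt1_general φ H ρ μ hdecomp hindep hgrad hmulgrad hequiv htrace
end

section
/- Let G be a finite group, I a finite set, and σ a permutation of I. For g ∈ G^I, define ν^σ(g) ∈ G^I by ν^σ(g)_{σ^m(i_a)} = g_{σ^m(i_a)} g_{σ^{m-1}(i_a)} ⋯ g_{i_a}, where i_a is a chosen representative of each σ-orbit a and 0 ≤ m ≤ |a|-1. Then in the wreath product G^I ⋊ Σ_I one has ν^σ(g)⁻¹ · (gσ) · ν^σ(g) = ε_𝔤 σ, where 𝔤_a = g_{σ^{|a|-1}(i_a)} ⋯ g_{σ(i_a)} g_{i_a} is the cycle product and ε_𝔤 ∈ G^I has component 𝔤_a at index i_a and 1 elsewhere. -/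
/-- The action of `Σ_I` on `G^I` used to form the wreath product `G^I ⋊ Σ_I`:
`(h^σ)_i = h_{σ i}`, and the semidirect-product convention of Mathlib
`(g, σ) * (h, τ) = (g * φ σ h, σ τ)` realizes `gσ · hτ = g h^{σ⁻¹} στ`. -/
def wrAct (G I : Type*) [Group G] : Equiv.Perm I →* MulAut (I → G) where
  toFun σ :=
    { toFun := fun g i => g (σ⁻¹ i)
      invFun := fun g i => g (σ i)
      left_inv := fun g => funext fun i => by simp
      right_inv := fun g => funext fun i => by simp
      map_mul' := fun g h => rfl }
  map_one' := by
    ext g i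
    simp
  map_mul' := fun σ τ => by
    ext g i
    simp [Equiv.Perm.mul_apply]

/-- The wreath product `G^I ⋊ Σ_I`. -/
abbrev WreathProduct (G I : Type*) [Group G] : Type _ :=
  (I → G) ⋊[wrAct G I] Equiv.Perm I

/-- The (ordered) partial cycle product
`g_{σ^{n-1}(i)} · g_{σ^{n-2}(i)} ⋯ g_{σ(i)} · g_i` of `g : I → G` along the
`σ`-trajectory of `i`; for `n` the size of the `σ`-orbit of `i` this is the
cycle product `ψ^σ(g)_a` of the orbit `a` of `i` with representative `i`. -/
def cycProd {G I : Type*} [Group G] (σ : Equiv.Perm I) (g : I → G) (i : I) (n : ℕ) : G :=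
  ((List.range n).map fun k => g ((σ ^ (n - 1 - k)) i)).prod

/-- The element `ν^σ(g) ∈ G^I`, relative to a choice `rep` of orbit
representatives and the "position" function `m` (so `i = σ^(m i) (rep i)`):
`ν^σ(g)_{σ^m(i_a)} = g_{σ^m(i_a)} ⋯ g_{σ(i_a)} g_{i_a}`. -/
def nuFun {G I : Type*} [Group G] (σ : Equiv.Perm I) (g : I → G)
    (rep : I → I) (m : I → ℕ) : I → G :=
  fun i => cycProd σ g (rep i) (m i + 1)

/-- The element `ε_𝔤 ∈ G^I` whose component at each orbit representative is the
cycle product of that orbit and is `1` elsewhere. -/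
noncomputable def epsFun {G I : Type*} [Group G] [DecidableEq I] (σ : Equiv.Perm I) (g : I → G)
    (rep : I → I) : I → G :=
  fun i => if rep i = i then cycProd σ g i (Function.minimalPeriod (⇑σ) i) else 1

open SemidirectProduct

/-!
Conjugating `gσ` by `ν = ν^σ(g)` gives `ν⁻¹ g ν^{σ⁻¹} σ`, whose component at `σ i` is
`ν_{σ i}⁻¹ g_{σ i} ν_i`. Since `ν_{σ i} = g_{σ i} ν_i` whenever `σ i` is not an orbit
representative, these components telescope to `1`, except where `σ i = i_a` closes the orbit;
there `ν_i` is the full cycle product and `ν_{i_a} = g_{i_a}`, leaving `𝔤_a`.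
-/

theorem SemidirectProduct.inl_inv_mul_mul_inl {N H : Type*} [Group N] [Group H]
    {φ : H →* MulAut N} (n a : N) (s : H) :
    (inl n : N ⋊[φ] H)⁻¹ * (inl a * inr s) * inl n = inl (n⁻¹ * a * φ s n) * inr s := by
  ext <;> simp

theorem Function.eq_mod_minimalPeriod_of_iterate_eq {α : Type*} {f : α → α} {x : α}
    {k n : ℕ} (hk : k < minimalPeriod f x) (h : f^[k] x = f^[n] x) : k = n % minimalPeriod f x :=
  iterate_injOn_Iio_minimalPeriod hk (Nat.mod_lt _ (Nat.zero_lt_of_lt hk))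
    (h.trans iterate_mod_minimalPeriod_eq.symm)

section WreathConjugation

variable {G I : Type*} [Group G] (σ : Equiv.Perm I) (g : I → G)

theorem wrAct_apply (h : I → G) (i : I) : wrAct G I σ h i = h (σ⁻¹ i) := rfl

theorem cycProd_zero (i : I) : cycProd σ g i 0 = 1 := rfl

theorem cycProd_succ (i : I) (n : ℕ) :
    cycProd σ g i (n + 1) = g ((σ ^ n) i) * cycProd σ g i n := by
  unfold cycProd
  rw [List.range_succ_eq_map, List.map_cons, List.prod_cons, List.map_map]
  congr 2
  refine List.map_congr_left fun k _ => ?_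
  simp only [Function.comp_apply]
  congr 3
  omega

variable {σ} {rep : I → I} {m : I → ℕ}
  (hrep : ∀ i, rep (σ i) = rep i) (hm : ∀ i, (σ ^ m i) (rep i) = i)
  (hmlt : ∀ i, m i < Function.minimalPeriod σ (rep i))

include hm in
theorem nuFun_apply (i : I) : nuFun σ g rep m i = g i * cycProd σ g (rep i) (m i) := by
  rw [nuFun, cycProd_succ, hm]

include hm hmlt in
theorem rep_eq_self_iff {i : I} : rep i = i ↔ m i = 0 := by
  constructor
  · intro hi
    have h := Function.eq_mod_minimalPeriod_of_iterate_eq (n := 0) (hmlt i)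
      (by rw [← Equiv.Perm.coe_pow, hm, Function.iterate_zero_apply, hi])
    rwa [Nat.zero_mod] at h
  · intro hi
    simpa [hi] using hm i

include hrep hm hmlt in
theorem position_apply_eq_succ_mod (i : I) :
    m (σ i) = (m i + 1) % Function.minimalPeriod σ (rep i) := by
  refine Function.eq_mod_minimalPeriod_of_iterate_eq (hrep i ▸ hmlt (σ i)) ?_
  rw [← Equiv.Perm.coe_pow, ← Equiv.Perm.coe_pow, ← hrep, hm, pow_succ', Equiv.Perm.mul_apply,
    hrep, hm]

include hrep hm hmlt in
theorem nuFun_conj_apply [DecidableEq I] (i : I) :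
    (nuFun σ g rep m (σ i))⁻¹ * g (σ i) * nuFun σ g rep m i = epsFun σ g rep (σ i) := by
  have hsucc : m (σ i) = (m i + 1) % Function.minimalPeriod σ (rep i) :=
    position_apply_eq_succ_mod hrep hm hmlt i
  have hν : nuFun σ g rep m (σ i) = g (σ i) * cycProd σ g (rep i) (m (σ i)) := by
    rw [nuFun_apply g hm, hrep]
  rw [hν, mul_inv_rev, inv_mul_cancel_right, nuFun, epsFun]
  rcases (Nat.add_one_le_of_lt (hmlt i)).lt_or_eq with hlt | heq
  · have hne : rep (σ i) ≠ σ i := by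
      rw [Ne, rep_eq_self_iff hm hmlt, hsucc, Nat.mod_eq_of_lt hlt]
      exact Nat.succ_ne_zero _
    rw [hsucc, Nat.mod_eq_of_lt hlt, inv_mul_cancel, if_neg hne]
  · have hfix : rep (σ i) = σ i := by rw [rep_eq_self_iff hm hmlt, hsucc, heq, Nat.mod_self]
    rw [hsucc, heq, Nat.mod_self, cycProd_zero, inv_one, one_mul, if_pos hfix, ← hrep i, hfix]

end WreathConjugation

theorem stmt2_general {G I : Type*} [Group G] [DecidableEq I]
    (σ : Equiv.Perm I) (g : I → G) (rep : I → I) (m : I → ℕ)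
    (hrep : ∀ i, rep (σ i) = rep i)
    (hm : ∀ i, (σ ^ m i) (rep i) = i)
    (hmlt : ∀ i, m i < Function.minimalPeriod (⇑σ) (rep i)) :
    (inl (φ := wrAct G I) (nuFun σ g rep m))⁻¹
        * (inl (φ := wrAct G I) g * inr (φ := wrAct G I) σ)
        * inl (φ := wrAct G I) (nuFun σ g rep m)
      = inl (φ := wrAct G I) (epsFun σ g rep) * inr (φ := wrAct G I) σ := by
  rw [inl_inv_mul_mul_inl]
  congr 2
  funext i
  obtain ⟨j, rfl⟩ := σ.surjective i
  rw [Pi.mul_apply, Pi.mul_apply, Pi.inv_apply, wrAct_apply, Equiv.Perm.coe_inv,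
    Equiv.symm_apply_apply]
  exact nuFun_conj_apply g hrep hm hmlt j

theorem stmt2 {G I : Type*} [Group G] [Fintype I] [DecidableEq I]
    (σ : Equiv.Perm I) (g : I → G) (rep : I → I) (m : I → ℕ)
    (hrep : ∀ i, rep (σ i) = rep i)
    (hm : ∀ i, (σ ^ m i) (rep i) = i)
    (hmlt : ∀ i, m i < Function.minimalPeriod (⇑σ) (rep i)) :
    (inl (φ := wrAct G I) (nuFun σ g rep m))⁻¹
        * (inl (φ := wrAct G I) g * inr (φ := wrAct G I) σ)
        * inl (φ := wrAct G I) (nuFun σ g rep m)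
      = inl (φ := wrAct G I) (epsFun σ g rep) * inr (φ := wrAct G I) σ :=
  stmt2_general σ g rep m hrep hm hmlt
end

section
/- Let σ, τ be permutations of a finite set I of cardinality n such that ⟨σ,τ⟩ acts transitively on I. Consider the multigraph Γ with vertex set I whose edges are {σ^k(i_a), σ^{k+1}(i_a)} for each σ-orbit a and 0 ≤ k ≤ |a|−2, and {τ^k(i_b), τ^{k+1}(i_b)} for each τ-orbit b and 0 ≤ k ≤ |b|−2 (with i_a, i_b chosen orbit representatives). Then Γ is connected, and its first Betti number b₁ = (number of edges) − n + 1 satisfies b₁ = l_σ + l_τ + 1 − n = 2·gd(σ,τ)_I + |o(στ)| − 1, where l_π = n − |o(π)| is the length of the permutation π. -/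
/-!
STATEMENT 7: Let `σ, τ` be permutations of a finite set `I` of cardinality `n`
with `⟨σ,τ⟩` transitive on `I`.  The multigraph `Γ` on vertex set `I` with
edges `{σ^k(i_a), σ^{k+1}(i_a)}` (`0 ≤ k ≤ |a|−2`, `a` a `σ`-orbit with
representative `i_a = repσ` of its points) and the analogous `τ`-edges is
connected, and its first Betti number `b₁ = #edges − n + 1` satisfies
`b₁ = l_σ + l_τ + 1 − n = 2·gd(σ,τ)_I + |o(στ)| − 1` where `l_π = n − |o(π)|`.
An edge `{x, σ x}` of the first kind occurs exactly when `σ x ≠ repσ x`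
(i.e. it is not the "closing" edge of its cycle), so `#edges = l_σ + l_τ`;
connectivity is expressed by reachability for the symmetrized edge relation.
-/
open Finset

lemma rep_pow {I : Type*} (σ : Equiv.Perm I) (rep : I → I)
    (h : ∀ i, rep (σ i) = rep i) : ∀ (k : ℕ) (x : I), rep ((σ ^ k) x) = rep x := by
  intro k
  induction k with
  | zero => intro x; simp
  | succ n ih => intro x; rw [pow_succ, Equiv.Perm.mul_apply, ih, h]

lemma reach_aux {I : Type*} [Fintype I] (σ : Equiv.Perm I) (rep : I → I)
    (R : I → I → Prop) (hR : ∀ x, σ x ≠ rep x → R x (σ x))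
    (hrep : ∀ i, rep (σ i) = rep i) (hrep' : ∀ i, σ.SameCycle (rep i) i)
    (x : I) : Relation.ReflTransGen R (rep x) x := by
  set r := rep x with hr
  obtain ⟨k, hk, hkx⟩ := (hrep' x).exists_pow_eq'
  have hrr : rep r = r := by
    rw [hr]
    conv_rhs => rw [← hkx]
    rw [rep_pow σ rep hrep]
  have hne : ∃ k : ℕ, (σ ^ k) r = x := ⟨k, hkx⟩
  classical
  set k₀ := Nat.find hne with hk₀
  have hk₀x : (σ ^ k₀) r = x := Nat.find_spec hne
  have key : ∀ j, j ≤ k₀ → Relation.ReflTransGen R r ((σ ^ j) r) := by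
    intro j
    induction j with
    | zero => intro _; exact Relation.ReflTransGen.refl
    | succ n ih =>
      intro hn
      have h1 : Relation.ReflTransGen R r ((σ ^ n) r) := ih (Nat.le_of_succ_le hn)
      have hne2 : σ ((σ ^ n) r) ≠ rep ((σ ^ n) r) := by
        rw [rep_pow σ rep hrep, hrr]
        intro hcon
        -- then (σ^(k₀ - (n+1))) r = x with k₀ - (n+1) < k₀
        have : (σ ^ (k₀ - (n + 1))) r = x := by
          rw [← hk₀x]
          have : (σ ^ k₀) r = (σ ^ (k₀ - (n+1))) ((σ ^ (n+1)) r) := by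
            rw [← Equiv.Perm.mul_apply, ← pow_add, Nat.sub_add_cancel hn]
          rw [this]
          congr 1
          rw [pow_succ', Equiv.Perm.mul_apply, hcon]
        have hle : k₀ ≤ k₀ - (n + 1) := hk₀ ▸ Nat.find_min' hne this
        omega
      have := hR _ hne2
      refine h1.tail ?_
      rwa [pow_succ', Equiv.Perm.mul_apply]
  have := key k₀ le_rfl
  rwa [hk₀x] at this

theorem stmt7 {I : Type*} [Fintype I] [DecidableEq I]
    (σ τ : Equiv.Perm I)
    (htrans : ∀ i j : I, ∃ p ∈ Subgroup.closure ({σ, τ} : Set (Equiv.Perm I)), p i = j)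
    (repσ repτ repστ : I → I)
    (hrepσ : ∀ i, repσ (σ i) = repσ i) (hrepσ' : ∀ i, σ.SameCycle (repσ i) i)
    (hrepτ : ∀ i, repτ (τ i) = repτ i) (hrepτ' : ∀ i, τ.SameCycle (repτ i) i)
    (hrepστ : ∀ i, repστ ((σ * τ) i) = repστ i)
    (hrepστ' : ∀ i, (σ * τ).SameCycle (repστ i) i) :
    -- Γ is connected:
    (∀ x y : I, Relation.ReflTransGen
        (fun x y : I =>
          (σ x = y ∧ σ x ≠ repσ x) ∨ (σ y = x ∧ σ y ≠ repσ y) ∨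
          (τ x = y ∧ τ x ≠ repτ x) ∨ (τ y = x ∧ τ y ≠ repτ y)) x y)
    -- b₁ = #edges − n + 1 = l_σ + l_τ + 1 − n:
    ∧ ((((Finset.univ.filter fun x : I => σ x ≠ repσ x).card
          + (Finset.univ.filter fun x : I => τ x ≠ repτ x).card : ℚ)
          - Fintype.card I + 1)
        = ((Fintype.card I : ℚ) - (Finset.univ.filter fun i : I => repσ i = i).card)
          + ((Fintype.card I : ℚ) - (Finset.univ.filter fun i : I => repτ i = i).card)
          + 1 - Fintype.card I)
    -- b₁ = 2·gd(σ,τ)_I + |o(στ)| − 1: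
    ∧ ((((Finset.univ.filter fun x : I => σ x ≠ repσ x).card
          + (Finset.univ.filter fun x : I => τ x ≠ repτ x).card : ℚ)
          - Fintype.card I + 1)
        = 2 * (((Fintype.card I : ℚ) + 2
              - (Finset.univ.filter fun i : I => repσ i = i).card
              - (Finset.univ.filter fun i : I => repτ i = i).card
              - (Finset.univ.filter fun i : I => repστ i = i).card) / 2)
          + (Finset.univ.filter fun i : I => repστ i = i).card - 1) := by
  set R : I → I → Prop := fun x y : I =>
      (σ x = y ∧ σ x ≠ repσ x) ∨ (σ y = x ∧ σ y ≠ repσ y) ∨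
      (τ x = y ∧ τ x ≠ repτ x) ∨ (τ y = x ∧ τ y ≠ repτ y) with hRdef
  have hRsymm : Symmetric R := by
    intro x y h
    rw [hRdef] at *
    tauto
  have hsymm : Symmetric (Relation.ReflTransGen R) := fun x y h => (@Relation.ReflTransGen.stdSymm _ R ⟨hRsymm⟩).symm x y h
  have reachσ : ∀ x, Relation.ReflTransGen R (repσ x) x :=
    reach_aux σ repσ R (fun x h => Or.inl ⟨rfl, h⟩) hrepσ hrepσ'
  have reachτ : ∀ x, Relation.ReflTransGen R (repτ x) x :=
    reach_aux τ repτ R (fun x h => Or.inr (Or.inr (Or.inl ⟨rfl, h⟩))) hrepτ hrepτ'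
  have stepσ : ∀ x, Relation.ReflTransGen R x (σ x) := by
    intro x
    refine (hsymm (reachσ x)).trans ?_
    have := reachσ (σ x)
    rwa [hrepσ] at this
  have stepτ : ∀ x, Relation.ReflTransGen R x (τ x) := by
    intro x
    refine (hsymm (reachτ x)).trans ?_
    have := reachτ (τ x)
    rwa [hrepτ] at this
  have hgen : ∀ p ∈ Subgroup.closure ({σ, τ} : Set (Equiv.Perm I)),
      ∀ x, Relation.ReflTransGen R x (p x) := by
    intro p hp
    induction hp using Subgroup.closure_induction with
    | mem g hg =>
      rcases hg with hg | hg
      · subst hg; exact stepσ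
      · rw [Set.mem_singleton_iff] at hg; subst hg; exact stepτ
    | one => intro x; exact Relation.ReflTransGen.refl
    | mul p q _ _ ihp ihq =>
      intro x
      exact (ihq x).trans (by simpa [Equiv.Perm.mul_apply] using ihp (q x))
    | inv p _ ih =>
      intro x
      have := ih (p⁻¹ x)
      rw [← Equiv.Perm.mul_apply, mul_inv_cancel, Equiv.Perm.one_apply] at this
      exact hsymm this
  refine ⟨fun x y => ?_, ?_, ?_⟩
  · obtain ⟨p, hp, hpx⟩ := htrans x y
    have := hgen p hp x
    rwa [hpx] at this
  all_goals {
    have cardσ : (Finset.univ.filter fun x : I => σ x = repσ x).card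
        = (Finset.univ.filter fun i : I => repσ i = i).card := by
      apply Finset.card_bij' (fun x _ => σ x) (fun i _ => σ⁻¹ i)
      · intro x hx
        simp only [mem_filter, mem_univ, true_and] at hx ⊢
        rw [hrepσ, hx]
      · intro i hi
        simp only [mem_filter, mem_univ, true_and] at hi ⊢
        have : repσ (σ⁻¹ i) = repσ i := by
          have h2 := hrepσ (σ⁻¹ i)
          rw [← Equiv.Perm.mul_apply, mul_inv_cancel, Equiv.Perm.one_apply] at h2
          exact h2.symm
        rw [← Equiv.Perm.mul_apply, mul_inv_cancel, Equiv.Perm.one_apply, this, hi]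
      · intro x _; simp
      · intro i _; simp
    have cardτ : (Finset.univ.filter fun x : I => τ x = repτ x).card
        = (Finset.univ.filter fun i : I => repτ i = i).card := by
      apply Finset.card_bij' (fun x _ => τ x) (fun i _ => τ⁻¹ i)
      · intro x hx
        simp only [mem_filter, mem_univ, true_and] at hx ⊢
        rw [hrepτ, hx]
      · intro i hi
        simp only [mem_filter, mem_univ, true_and] at hi ⊢
        have : repτ (τ⁻¹ i) = repτ i := by
          have h2 := hrepτ (τ⁻¹ i)
          rw [← Equiv.Perm.mul_apply, mul_inv_cancel, Equiv.Perm.one_apply] at h2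
          exact h2.symm
        rw [← Equiv.Perm.mul_apply, mul_inv_cancel, Equiv.Perm.one_apply, this, hi]
      · intro x _; simp
      · intro i _; simp
    have hσsum := Finset.card_filter_add_card_filter_not
      (s := (Finset.univ : Finset I)) (p := fun x : I => σ x = repσ x)
    have hτsum := Finset.card_filter_add_card_filter_not
      (s := (Finset.univ : Finset I)) (p := fun x : I => τ x = repτ x)
    rw [Finset.card_univ] at hσsum hτsum
    rw [cardσ] at hσsum
    rw [cardτ] at hτsum
    have e1 : ((Finset.univ.filter fun x : I => σ x ≠ repσ x).card : ℚ)
        = (Fintype.card I : ℚ) - (Finset.univ.filter fun i : I => repσ i = i).card := by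
      have := hσsum
      push_cast [← this]
      ring
    have e2 : ((Finset.univ.filter fun x : I => τ x ≠ repτ x).card : ℚ)
        = (Fintype.card I : ℚ) - (Finset.univ.filter fun i : I => repτ i = i).card := by
      have := hτsum
      push_cast [← this]
      ring
    rw [e1, e2]
    ring
  }
end

section
/- Let σ be an n-cycle, let U be a ℂ-vector space with an automorphism ρ(𝔤) of order r, and consider U ⊗ ℂ^I with the automorphism T sending u ⊗ e_{j₀} ↦ ρ(𝔤)u ⊗ e_{σ⁻¹(j₀)} for the distinguished index j₀ and u ⊗ e_j ↦ u ⊗ e_{σ⁻¹(j)} for j ≠ j₀ (the 'twisted permutation' action of the element ε_𝔤 σ). If U = ⊕_{l=0}^{r−1} U_l is the eigenspace decomposition of ρ(𝔤) with eigenvalue exp(−2πil/r) on U_l, then T has eigenvalue exp(−2πi(l/(nr) + k/n)) with multiplicity dim U_l for each 0 ≤ l ≤ r−1, 0 ≤ k ≤ n−1; in particular T has order dividing nr and the sum Σ (age-weights) satisfies Σ_{k,l} (l/(nr) + k/n) dim(U_l ⊗ V_k^l) = Σ_l (l/r) dim U_l + ((n−1)/2) dim U. -/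
/-!
STATEMENT 11: Let `σ` be an `n`-cycle (realized on `Fin n` as `i ↦ i + 1`,
with distinguished index `j₀ = 0`), `U` a f.d. `ℂ`-vector space with an
automorphism `g = ρ(𝔤)` of order dividing `r`, and let `T` be the "twisted
permutation" automorphism of `U ⊗ ℂ^n ≅ (Fin n → U)` of the element `ε_𝔤 σ`:
`(T v) i = g (v (i+1))` if `i + 1 = 0` and `(T v) i = v (i+1)` otherwise.
Then for each `0 ≤ l < r`, `0 ≤ k < n`, `T` has eigenvalue
`exp(−2πi(l/(nr) + k/n)) = exp(−2πi(l + kr)/(nr))` with multiplicity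
`dim U_l` (where `U_l` is the `exp(−2πil/r)`-eigenspace of `g`); in particular
`T` has order dividing `nr`; and the sum of age-weights satisfies
`∑_{k,l} (l/(nr) + k/n)·dim U_l = ∑_l (l/r)·dim U_l + ((n−1)/2)·dim U`.
-/
open Module Complex Finset Polynomial DirectSum

lemma fin_add_one_eq_zero_iff {n : ℕ} [NeZero n] (i : Fin n) :
    i + 1 = 0 ↔ (i : ℕ) + 1 = n := by
  rcases eq_or_lt_of_le (Nat.one_le_iff_ne_zero.mpr (NeZero.ne n)) with h | h
  · have h0 : (i : ℕ) = 0 := by have := i.isLt; omega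
    constructor
    · intro _; omega
    · intro _; apply Fin.ext
      subst h
      have := (i + 1).isLt
      simp only [Fin.val_zero]; omega
  · rw [Fin.ext_iff, Fin.val_add, Fin.val_one', Fin.val_zero, Nat.mod_eq_of_lt h]
    have hi := i.isLt
    constructor
    · intro hm
      rcases eq_or_lt_of_le (Nat.succ_le_of_lt hi) with h' | h'
      · exact h'
      · rw [Nat.mod_eq_of_lt h'] at hm; omega
    · intro hm; rw [hm, Nat.mod_self]

lemma fin_val_add_one_of_ne {n : ℕ} [NeZero n] (i : Fin n) (h : i + 1 ≠ 0) :
    ((i + 1 : Fin n) : ℕ) = (i : ℕ) + 1 := by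
  rw [Ne, fin_add_one_eq_zero_iff] at h
  have hi := i.isLt
  have h2 : (i : ℕ) + 1 < n := by omega
  have h1 : 1 < n := by omega
  rw [Fin.val_add, Fin.val_one', Nat.mod_eq_of_lt h1, Nat.mod_eq_of_lt h2]

section Eig
variable {n : ℕ} [NeZero n] {U : Type*} [AddCommGroup U] [Module ℂ U]

lemma eig_formula (g : Module.End ℂ U) (T : Module.End ℂ (Fin n → U))
    (hT : ∀ (v : Fin n → U) (i : Fin n),
      T v i = if i + 1 = 0 then g (v (i + 1)) else v (i + 1))
    (μ : ℂ) {v : Fin n → U} (hv : T v = μ • v) :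
    ∀ i : Fin n, v i = μ ^ (i : ℕ) • v 0 := by
  have key : ∀ m (h : m < n), v ⟨m, h⟩ = μ ^ m • v 0 := by
    intro m
    induction m with
    | zero =>
      intro h; rw [pow_zero, one_smul]; congr 1
    | succ m ih =>
      intro h
      have hm : m < n := Nat.lt_of_succ_lt h
      set i : Fin n := ⟨m, hm⟩ with hidef
      have hne : i + 1 ≠ 0 := by
        rw [Ne, fin_add_one_eq_zero_iff]; simp [hidef]; omega
      have hi1 : i + 1 = ⟨m + 1, h⟩ := by
        apply Fin.ext; rw [fin_val_add_one_of_ne _ hne]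
      have h1 : T v i = v (i + 1) := by rw [hT v i, if_neg hne]
      have h2 : T v i = μ • v i := by rw [hv]; rfl
      rw [hi1] at h1
      rw [← h1, h2, ih hm, smul_smul, ← pow_succ']
  intro i
  have := key i.val i.isLt
  simpa using this

lemma eig_mem_forward (g : Module.End ℂ U) (T : Module.End ℂ (Fin n → U))
    (hT : ∀ (v : Fin n → U) (i : Fin n),
      T v i = if i + 1 = 0 then g (v (i + 1)) else v (i + 1))
    (μ : ℂ) {v : Fin n → U} (hv : v ∈ Module.End.eigenspace T μ) :
    v 0 ∈ Module.End.eigenspace g (μ ^ n) := by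
  have hnpos : 0 < n := Nat.pos_of_ne_zero (NeZero.ne n)
  rw [Module.End.mem_eigenspace_iff] at hv ⊢
  have hform := eig_formula g T hT μ hv
  set i : Fin n := ⟨n - 1, by omega⟩ with hidef
  have hlast : i + 1 = 0 := by
    rw [fin_add_one_eq_zero_iff]; simp [hidef]; omega
  have h1 : T v i = g (v (i + 1)) := by rw [hT v i, if_pos hlast]
  have h2 : T v i = μ • v i := by rw [hv]; rfl
  rw [hlast] at h1
  have h3 : g (v 0) = μ • v i := by rw [← h1, h2]
  rw [h3, hform i, smul_smul, ← pow_succ']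
  congr 2
  simp [hidef]; omega

lemma eig_mem_backward (g : Module.End ℂ U) (T : Module.End ℂ (Fin n → U))
    (hT : ∀ (v : Fin n → U) (i : Fin n),
      T v i = if i + 1 = 0 then g (v (i + 1)) else v (i + 1))
    (μ : ℂ) {u : U} (hu : u ∈ Module.End.eigenspace g (μ ^ n)) :
    (fun i : Fin n => μ ^ (i : ℕ) • u) ∈ Module.End.eigenspace T μ := by
  have hnpos : 0 < n := Nat.pos_of_ne_zero (NeZero.ne n)
  rw [Module.End.mem_eigenspace_iff] at hu ⊢
  set w : Fin n → U := fun i : Fin n => μ ^ (i : ℕ) • u with hw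
  funext i
  have hwsmul : (μ • w) i = μ • μ ^ (i : ℕ) • u := rfl
  rw [hT, hwsmul]
  by_cases h : i + 1 = 0
  · have hival : (i : ℕ) + 1 = n := (fin_add_one_eq_zero_iff i).mp h
    rw [if_pos h, h]
    have hw0 : w 0 = u := by simp [hw]
    rw [hw0, hu, smul_smul, ← pow_succ', hival]
  · have hival : ((i + 1 : Fin n) : ℕ) = (i : ℕ) + 1 := fin_val_add_one_of_ne i h
    rw [if_neg h]
    show μ ^ ((i + 1 : Fin n) : ℕ) • u = _
    rw [hival, smul_smul, ← pow_succ']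

noncomputable def eigEquiv (g : Module.End ℂ U) (T : Module.End ℂ (Fin n → U))
    (hT : ∀ (v : Fin n → U) (i : Fin n),
      T v i = if i + 1 = 0 then g (v (i + 1)) else v (i + 1))
    (μ : ℂ) :
    Module.End.eigenspace T μ ≃ₗ[ℂ] Module.End.eigenspace g (μ ^ n) where
  toFun := fun v => ⟨v.1 0, eig_mem_forward g T hT μ v.2⟩
  map_add' := by intros; rfl
  map_smul' := by intros; rfl
  invFun := fun u => ⟨fun i : Fin n => μ ^ (i : ℕ) • u.1, eig_mem_backward g T hT μ u.2⟩
  left_inv := by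
    rintro ⟨v, hv⟩
    rw [Module.End.mem_eigenspace_iff] at hv
    apply Subtype.ext
    funext i
    exact (eig_formula g T hT μ hv i).symm
  right_inv := by
    rintro ⟨u, hu⟩
    apply Subtype.ext
    simp

end Eig

section Pow
variable {n : ℕ} [NeZero n] {U : Type*} [AddCommGroup U] [Module ℂ U]

open Fin.NatCast in
lemma pow_formula (g : Module.End ℂ U) (T : Module.End ℂ (Fin n → U))
    (hT : ∀ (v : Fin n → U) (i : Fin n),
      T v i = if i + 1 = 0 then g (v (i + 1)) else v (i + 1)) :
    ∀ m, m ≤ n → ∀ (v : Fin n → U) (i : Fin n),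
      (T ^ m) v i = if n ≤ (i : ℕ) + m then g (v (i + (m : Fin n)))
        else v (i + (m : Fin n)) := by
  intro m
  induction m with
  | zero =>
    intro _ v i
    rw [if_neg (by have := i.isLt; omega)]
    simp
  | succ m ih =>
    intro hm v i
    have hm' : m ≤ n := Nat.le_of_succ_le hm
    have hival := i.isLt
    rw [pow_succ, Module.End.mul_apply, ih hm' (T v) i]
    have hjval : ((i + (m : Fin n) : Fin n) : ℕ) = ((i : ℕ) + m) % n := by
      rw [Fin.val_add, Fin.val_natCast]
      conv_rhs => rw [Nat.add_mod]
      rw [Nat.mod_eq_of_lt i.isLt]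
    set j : Fin n := i + (m : Fin n) with hjdef
    have hsucc : j + 1 = i + ((m + 1 : ℕ) : Fin n) := by
      push_cast
      rw [add_assoc]
    by_cases hc : n ≤ (i : ℕ) + m
    · -- one wrap already happened
      have hjv : (j : ℕ) = (i : ℕ) + m - n := by
        rw [hjval, Nat.mod_eq_sub_mod hc, Nat.mod_eq_of_lt (by omega)]
      have hne : j + 1 ≠ 0 := by
        rw [Ne, fin_add_one_eq_zero_iff, hjv]; omega
      rw [if_pos hc, hT v j, if_neg hne, hsucc, if_pos (by omega)]
    · have hjv : (j : ℕ) = (i : ℕ) + m := by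
        rw [hjval, Nat.mod_eq_of_lt (by omega)]
      rw [if_neg hc, hT v j]
      by_cases hc2 : n ≤ (i : ℕ) + (m + 1)
      · have h0 : j + 1 = 0 := by rw [fin_add_one_eq_zero_iff, hjv]; omega
        rw [if_pos h0, if_pos hc2, hsucc]
      · have h0 : j + 1 ≠ 0 := by rw [Ne, fin_add_one_eq_zero_iff, hjv]; omega
        rw [if_neg h0, if_neg hc2, hsucc]

open Fin.NatCast in
lemma pow_n (g : Module.End ℂ U) (T : Module.End ℂ (Fin n → U))
    (hT : ∀ (v : Fin n → U) (i : Fin n),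
      T v i = if i + 1 = 0 then g (v (i + 1)) else v (i + 1))
    (v : Fin n → U) (i : Fin n) : (T ^ n) v i = g (v i) := by
  rw [pow_formula g T hT n le_rfl v i, if_pos (by omega)]
  congr 1
  rw [Fin.natCast_self, add_zero]

lemma pow_nr (n r : ℕ) [NeZero n] (g : Module.End ℂ U) (hg : g ^ r = 1)
    (T : Module.End ℂ (Fin n → U))
    (hT : ∀ (v : Fin n → U) (i : Fin n),
      T v i = if i + 1 = 0 then g (v (i + 1)) else v (i + 1)) :
    T ^ (n * r) = 1 := by
  have key : ∀ s (v : Fin n → U) (i : Fin n), ((T ^ n) ^ s) v i = (g ^ s) (v i) := by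
    intro s
    induction s with
    | zero => intro v i; rfl
    | succ s ih =>
      intro v i
      rw [pow_succ, Module.End.mul_apply, ih ((T ^ n) v) i, pow_n g T hT v i,
        pow_succ, Module.End.mul_apply]
  apply LinearMap.ext
  intro v
  funext i
  rw [pow_mul]
  show ((T ^ n) ^ r) v i = v i
  rw [key r v i, hg]
  rfl

end Pow

section Sum
variable {U : Type*} [AddCommGroup U] [Module ℂ U] [FiniteDimensional ℂ U]

lemma omega_pow (r : ℕ) (hr : 0 < r) (l : ℕ) :
    Complex.exp (-(2 * Real.pi * Complex.I) / r) ^ l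
      = Complex.exp (-(2 * Real.pi * Complex.I) * l / r) := by
  rw [← Complex.exp_nat_mul]
  congr 1
  ring

lemma omega_primitive (r : ℕ) (hr : 0 < r) :
    IsPrimitiveRoot (Complex.exp (-(2 * Real.pi * Complex.I) / r)) r := by
  have h := (Complex.isPrimitiveRoot_exp r hr.ne').inv
  have : Complex.exp (-(2 * Real.pi * Complex.I) / r)
      = (Complex.exp (2 * Real.pi * Complex.I / r))⁻¹ := by
    rw [← Complex.exp_neg]
    congr 1
    ring
  rwa [this]

lemma sum_eig_finrank (r : ℕ) (hr : 0 < r) (g : Module.End ℂ U) (hg : g ^ r = 1) :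
    ∑ l ∈ Finset.range r, Module.finrank ℂ (Module.End.eigenspace g
        (Complex.exp (-(2 * Real.pi * Complex.I) * (l : ℂ) / (r : ℂ))))
      = Module.finrank ℂ U := by
  haveI : NeZero r := ⟨hr.ne'⟩
  set ω : ℂ := Complex.exp (-(2 * Real.pi * Complex.I) / r) with hωdef
  have hω := omega_primitive r hr
  -- semisimplicity
  have hsq : Squarefree ((Polynomial.X : ℂ[X]) ^ r - 1) :=
    (Polynomial.X_pow_sub_one_separable_iff.mpr
      (by exact_mod_cast Nat.cast_ne_zero.mpr hr.ne' : (r : ℂ) ≠ 0)).squarefree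
  have haev : Polynomial.aeval g ((Polynomial.X : ℂ[X]) ^ r - 1) = 0 := by
    simp [hg]
  have hss := Module.End.isSemisimple_of_squarefree_aeval_eq_zero hsq haev
  have htop : ⨆ μ : ℂ, g.eigenspace μ = ⊤ := by
    have h1 : ∀ μ : ℂ, g.maxGenEigenspace μ = g.eigenspace μ := fun μ =>
      hss.isFinitelySemisimple.maxGenEigenspace_eq_eigenspace μ
    rw [← Module.End.iSup_maxGenEigenspace_eq_top g]
    exact iSup_congr fun μ => (h1 μ).symm
  set W : Fin r → Submodule ℂ U := fun l => g.eigenspace (ω ^ (l : ℕ)) with hWdef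
  have hinj : Function.Injective (fun l : Fin r => ω ^ (l : ℕ)) := by
    intro a b hab
    exact Fin.ext (hω.pow_inj a.isLt b.isLt hab)
  have hindep : iSupIndep W := g.eigenspaces_iSupIndep.comp hinj
  have hWtop : ⨆ l, W l = ⊤ := by
    refine le_antisymm le_top ?_
    rw [← htop]
    refine iSup_le fun μ => ?_
    rcases eq_or_ne (g.eigenspace μ) ⊥ with hb | hb
    · rw [hb]; exact bot_le
    · obtain ⟨x, hx, hx0⟩ := (Submodule.ne_bot_iff _).mp hb
      have hgx : g x = μ • x := Module.End.mem_eigenspace_iff.mp hx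
      have hpows : ∀ s : ℕ, (g ^ s) x = μ ^ s • x := by
        intro s
        induction s with
        | zero => simp
        | succ s ih =>
          rw [pow_succ, Module.End.mul_apply, hgx, map_smul, ih, smul_smul, ← pow_succ']
      have hμr : μ ^ r = 1 := by
        have h1 : (g ^ r) x = x := by rw [hg]; rfl
        rw [hpows r] at h1
        have h2 : (μ ^ r - 1) • x = 0 := by
          rw [sub_smul, h1, one_smul, sub_self]
        rcases smul_eq_zero.mp h2 with h3 | h3
        · exact sub_eq_zero.mp h3
        · exact absurd h3 hx0
      obtain ⟨l, hl, hle⟩ := hω.eq_pow_of_pow_eq_one hμr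
      have : g.eigenspace μ = W ⟨l, hl⟩ := by rw [hWdef]; simp only [← hle]; rfl
      rw [this]
      exact le_iSup W ⟨l, hl⟩
  have hinternal : DirectSum.IsInternal W :=
    (DirectSum.isInternal_submodule_iff_iSupIndep_and_iSup_eq_top W).mpr ⟨hindep, hWtop⟩
  have hequiv : (⨁ l, W l) ≃ₗ[ℂ] U :=
    LinearEquiv.ofBijective (DirectSum.coeLinearMap W) hinternal
  have h4 : Module.finrank ℂ U = ∑ l : Fin r, Module.finrank ℂ (W l) := by
    rw [← hequiv.finrank_eq, finrank_directSum]
  rw [h4, Finset.sum_range]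
  refine Finset.sum_congr rfl fun l _ => ?_
  rw [hWdef]
  simp only
  exact congrArg (fun μ => Module.finrank ℂ (g.eigenspace μ)) (omega_pow r hr l).symm

end Sum

theorem stmt11 (n r : ℕ) (hn : 0 < n) (hr : 0 < r) [NeZero n]
    {U : Type*} [AddCommGroup U] [Module ℂ U] [FiniteDimensional ℂ U]
    (g : Module.End ℂ U) (hg : g ^ r = 1)
    (T : Module.End ℂ (Fin n → U))
    (hT : ∀ (v : Fin n → U) (i : Fin n),
      T v i = if i + 1 = 0 then g (v (i + 1)) else v (i + 1)) :
    -- eigenvalues and multiplicities of `T`: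
    (∀ l k : ℕ, l < r → k < n →
      Module.finrank ℂ (Module.End.eigenspace T
          (Complex.exp (-(2 * Real.pi * Complex.I) * ((l : ℂ) + k * r) / ((n : ℂ) * r))))
        = Module.finrank ℂ (Module.End.eigenspace g
            (Complex.exp (-(2 * Real.pi * Complex.I) * (l : ℂ) / (r : ℂ)))))
    -- `T` has order dividing `nr`:
    ∧ T ^ (n * r) = 1
    -- the sum of the age-weights:
    ∧ (∑ l ∈ Finset.range r, ∑ k ∈ Finset.range n,
          ((l : ℝ) / (n * r) + (k : ℝ) / n)
            * Module.finrank ℂ (Module.End.eigenspace g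
                (Complex.exp (-(2 * Real.pi * Complex.I) * (l : ℂ) / (r : ℂ))))
        = (∑ l ∈ Finset.range r,
            ((l : ℝ) / r)
              * Module.finrank ℂ (Module.End.eigenspace g
                  (Complex.exp (-(2 * Real.pi * Complex.I) * (l : ℂ) / (r : ℂ)))))
          + ((n : ℝ) - 1) / 2 * Module.finrank ℂ U) := by
  have hn0 : (n : ℂ) ≠ 0 := Nat.cast_ne_zero.mpr hn.ne'
  have hr0 : (r : ℂ) ≠ 0 := Nat.cast_ne_zero.mpr hr.ne'
  refine ⟨?_, pow_nr n r g hg T hT, ?_⟩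
  · intro l k _ _
    have h1 : Complex.exp (-(k : ℂ) * (2 * Real.pi * Complex.I)) = 1 := by
      have h := Complex.exp_int_mul_two_pi_mul_I (-(k : ℤ))
      push_cast at h
      exact h
    have hμ : Complex.exp (-(2 * Real.pi * Complex.I) * ((l : ℂ) + k * r) / ((n : ℂ) * r)) ^ n
        = Complex.exp (-(2 * Real.pi * Complex.I) * (l : ℂ) / (r : ℂ)) := by
      rw [← Complex.exp_nat_mul]
      have harg : (n : ℂ) * (-(2 * Real.pi * Complex.I) * ((l : ℂ) + k * r) / ((n : ℂ) * r))
          = -(2 * Real.pi * Complex.I) * (l : ℂ) / (r : ℂ)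
            + -(k : ℂ) * (2 * Real.pi * Complex.I) := by
        field_simp
        ring
      rw [harg, Complex.exp_add, h1, mul_one]
    rw [← hμ]
    exact (eigEquiv g T hT _).finrank_eq
  · have hsum := sum_eig_finrank r hr g hg
    have hsumR : ∑ l ∈ Finset.range r, (Module.finrank ℂ (Module.End.eigenspace g
          (Complex.exp (-(2 * Real.pi * Complex.I) * (l : ℂ) / (r : ℂ)))) : ℝ)
        = (Module.finrank ℂ U : ℝ) := by
      exact_mod_cast congrArg (Nat.cast : ℕ → ℝ) hsum
    have hnR : (n : ℝ) ≠ 0 := Nat.cast_ne_zero.mpr hn.ne'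
    have hrR : (r : ℝ) ≠ 0 := Nat.cast_ne_zero.mpr hr.ne'
    have gauss : (∑ k ∈ Finset.range n, (k : ℝ)) = (n : ℝ) * ((n : ℝ) - 1) / 2 := by
      have h2 := Finset.sum_range_id_mul_two n
      have h3 : (∑ i ∈ Finset.range n, (i : ℝ)) * 2 = (n : ℝ) * ((n : ℝ) - 1) := by
        have h4 := congrArg (Nat.cast : ℕ → ℝ) h2
        push_cast [Nat.cast_sub hn] at h4
        exact h4
      linarith
    have step1 : ∀ l ∈ Finset.range r,
        ∑ k ∈ Finset.range n, ((l : ℝ) / (n * r) + (k : ℝ) / n)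
            * (Module.finrank ℂ (Module.End.eigenspace g
                (Complex.exp (-(2 * Real.pi * Complex.I) * (l : ℂ) / (r : ℂ)))) : ℝ)
          = ((l : ℝ) / r + ((n : ℝ) - 1) / 2)
            * (Module.finrank ℂ (Module.End.eigenspace g
                (Complex.exp (-(2 * Real.pi * Complex.I) * (l : ℂ) / (r : ℂ)))) : ℝ) := by
      intro l _
      rw [← Finset.sum_mul]
      congr 1
      rw [Finset.sum_add_distrib, Finset.sum_const, Finset.card_range, ← Finset.sum_div,
        gauss, nsmul_eq_mul]
      field_simp
    rw [Finset.sum_congr rfl step1]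
    simp_rw [add_mul]
    rw [Finset.sum_add_distrib, ← Finset.mul_sum, hsumR]
end
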